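/- Let Γ₁, Γ₂, Γ₃ be real numbers, P_K : (0,∞) → ℝ continuous, and let (X₁, X₂, X₃) be a solution of the EP-PV system with N = 3 on an interval J. Write L_{mn}(t) = |X_m(t) − X_n(t)| and let A(t) = (1/2)·((X₂(t)−X₁(t)) ∧ (X₃(t)−X₁(t))) be the signed area of the triangle, where (u₁,u₂) ∧ (v₁,v₂) := u₁v₂ − u₂v₁. Then for all t ∈ J, d/dt (L₁₂(t)²) = (2/π) Γ₃ A(t) [ P_K(L₂₃(t))/L₂₃(t)² − P_K(L₃₁(t))/L₃₁(t)² ], and the analogous identities hold for L₂₃² (with Γ₁ and the pair L₃₁, L₁₂) and for L₃₁² (with Γ₂ and the pair L₁₂, L₂₃). -/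

import Mathlib

open scoped BigOperators RealInnerProductSpace

/-!
Along a solution `d/dt ‖Xᵢ - Xⱼ‖² = 2⟪Xᵢ - Xⱼ, Ẋᵢ - Ẋⱼ⟫`, and `⟪u, v^⊥⟫ = u ∧ v` turns every
velocity term into a wedge product with `Xᵢ - Xⱼ`. The terms of the pair `(i, j)` acting on each
other are multiples of `(Xᵢ - Xⱼ)^⊥` and drop out. The two terms coming from the third vortex `k`
carry `(Xᵢ - Xⱼ) ∧ (Xᵢ - Xₖ)` and `(Xᵢ - Xⱼ) ∧ (Xⱼ - Xₖ)`, both equal to twice the signed area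
`A`, so only the difference of the weights `P_K(L)/L²` at `L = Lⱼₖ` and `L = Lₖᵢ` survives.
-/

/-- The perpendicular `(v₁, v₂)^⊥ = (v₂, −v₁)` of a vector in ℝ². -/
noncomputable def perp (v : EuclideanSpace ℝ (Fin 2)) : EuclideanSpace ℝ (Fin 2) :=
  (WithLp.equiv 2 (Fin 2 → ℝ)).symm ![v 1, -v 0]

/-- The right-hand side of the (scaled) Euler–Poincaré point-vortex system for the
`n`-th vortex, given the current positions `X`. -/
noncomputable def eppvRHS {N : ℕ} (Γ : Fin N → ℝ) (P_K : ℝ → ℝ)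
    (X : Fin N → EuclideanSpace ℝ (Fin 2)) (n : Fin N) : EuclideanSpace ℝ (Fin 2) :=
  (-(1 / (2 * Real.pi))) • ∑ m ∈ Finset.univ.filter (fun m => m ≠ n),
    ((Γ m * P_K ‖X n - X m‖) / ‖X n - X m‖ ^ 2) • perp (X n - X m)

/-- `X : Fin N → ℝ → ℝ²` is a solution of the EP-PV system on `J ⊆ ℝ`:
the vortices stay pairwise distinct on `J` and each curve is differentiable on `J`
with derivative given by the EP-PV vector field. -/
def IsEPPVSolution {N : ℕ} (Γ : Fin N → ℝ) (P_K : ℝ → ℝ) (J : Set ℝ)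
    (X : Fin N → ℝ → EuclideanSpace ℝ (Fin 2)) : Prop :=
  (∀ m n : Fin N, m ≠ n → ∀ t ∈ J, X m t ≠ X n t) ∧
  (∀ n : Fin N, ∀ t ∈ J,
    HasDerivWithinAt (X n) (eppvRHS Γ P_K (fun m => X m t) n) J t)


/-- The wedge product `u ∧ v = u₁v₂ − u₂v₁` of two vectors in ℝ². -/
noncomputable def wedge (u v : EuclideanSpace ℝ (Fin 2)) : ℝ :=
  u 0 * v 1 - u 1 * v 0

theorem inner_perp (u v : EuclideanSpace ℝ (Fin 2)) : ⟪u, perp v⟫ = wedge u v := by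
  simp only [perp, wedge, PiLp.inner_apply, Fin.sum_univ_two, RCLike.inner_apply, conj_trivial,
    WithLp.equiv_symm_apply, Matrix.cons_val_zero, Matrix.cons_val_one]
  ring

theorem wedge_sub_sub_rotate (a b c : EuclideanSpace ℝ (Fin 2)) :
    wedge (b - a) (c - a) = wedge (c - b) (a - b) := by
  simp only [wedge, PiLp.sub_apply]
  ring

theorem IsEPPVSolution.hasDerivWithinAt_norm_sub_sq {N : ℕ} {Γ : Fin N → ℝ} {P_K : ℝ → ℝ}
    {J : Set ℝ} {X : Fin N → ℝ → EuclideanSpace ℝ (Fin 2)} (hX : IsEPPVSolution Γ P_K J X)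
    (i j : Fin N) {t : ℝ} (ht : t ∈ J) :
    HasDerivWithinAt (fun τ => ‖X i τ - X j τ‖ ^ 2)
      (2 * ⟪X i t - X j t,
        eppvRHS Γ P_K (fun m => X m t) i - eppvRHS Γ P_K (fun m => X m t) j⟫) J t :=
  ((hX.2 i t ht).sub (hX.2 j t ht)).norm_sq

theorem eppvRHS_fin_three (Γ : Fin 3 → ℝ) (P_K : ℝ → ℝ) (X : Fin 3 → EuclideanSpace ℝ (Fin 2))
    {i j k : Fin 3} (hij : i ≠ j) (hik : i ≠ k) (hjk : j ≠ k) :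
    eppvRHS Γ P_K X i = (-(1 / (2 * Real.pi))) •
      ((Γ j * P_K ‖X i - X j‖ / ‖X i - X j‖ ^ 2) • perp (X i - X j) +
        (Γ k * P_K ‖X i - X k‖ / ‖X i - X k‖ ^ 2) • perp (X i - X k)) := by
  have hothers : Finset.univ.erase i = {j, k} := by
    revert i j k; decide
  rw [eppvRHS, Finset.filter_ne', hothers, Finset.sum_pair hjk]

theorem IsEPPVSolution.hasDerivWithinAt_norm_sub_sq_fin_three {Γ : Fin 3 → ℝ} {P_K : ℝ → ℝ}
    {J : Set ℝ} {X : Fin 3 → ℝ → EuclideanSpace ℝ (Fin 2)} (hX : IsEPPVSolution Γ P_K J X)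
    {i j k : Fin 3} (hij : i ≠ j) (hik : i ≠ k) (hjk : j ≠ k) {t : ℝ} (ht : t ∈ J) :
    HasDerivWithinAt (fun τ => ‖X i τ - X j τ‖ ^ 2)
      ((2 / Real.pi) * Γ k * ((1 / 2) * wedge (X j t - X i t) (X k t - X i t)) *
        (P_K ‖X j t - X k t‖ / ‖X j t - X k t‖ ^ 2
          - P_K ‖X k t - X i t‖ / ‖X k t - X i t‖ ^ 2)) J t := by
  convert hX.hasDerivWithinAt_norm_sub_sq i j ht using 1
  rw [eppvRHS_fin_three Γ P_K _ hij hik hjk, eppvRHS_fin_three Γ P_K _ hij.symm hjk hik]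
  simp only [inner_sub_right, inner_smul_right, inner_add_right, inner_perp,
    norm_sub_rev (X i t) (X k t)]
  simp only [wedge, PiLp.sub_apply]
  ring

theorem eppv_three_vortex_distance_eq_general (Γ : Fin 3 → ℝ) (P_K : ℝ → ℝ)
    (J : Set ℝ)
    (X : Fin 3 → ℝ → EuclideanSpace ℝ (Fin 2))
    (hX : IsEPPVSolution Γ P_K J X)
    (A : ℝ → ℝ)
    (hA : ∀ t, A t = (1 / 2) * wedge (X 1 t - X 0 t) (X 2 t - X 0 t)) :
    ∀ t ∈ J,
      HasDerivWithinAt (fun τ => ‖X 0 τ - X 1 τ‖ ^ 2)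
        ((2 / Real.pi) * Γ 2 * A t *
          (P_K ‖X 1 t - X 2 t‖ / ‖X 1 t - X 2 t‖ ^ 2
            - P_K ‖X 2 t - X 0 t‖ / ‖X 2 t - X 0 t‖ ^ 2)) J t ∧
      HasDerivWithinAt (fun τ => ‖X 1 τ - X 2 τ‖ ^ 2)
        ((2 / Real.pi) * Γ 0 * A t *
          (P_K ‖X 2 t - X 0 t‖ / ‖X 2 t - X 0 t‖ ^ 2
            - P_K ‖X 0 t - X 1 t‖ / ‖X 0 t - X 1 t‖ ^ 2)) J t ∧
      HasDerivWithinAt (fun τ => ‖X 2 τ - X 0 τ‖ ^ 2)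
        ((2 / Real.pi) * Γ 1 * A t *
          (P_K ‖X 0 t - X 1 t‖ / ‖X 0 t - X 1 t‖ ^ 2
            - P_K ‖X 1 t - X 2 t‖ / ‖X 1 t - X 2 t‖ ^ 2)) J t := by
  intro t ht
  rw [hA]
  refine ⟨?_, ?_, ?_⟩
  · exact hX.hasDerivWithinAt_norm_sub_sq_fin_three (i := 0) (j := 1) (k := 2)
      (by decide) (by decide) (by decide) ht
  · rw [wedge_sub_sub_rotate (X 0 t)]
    exact hX.hasDerivWithinAt_norm_sub_sq_fin_three (i := 1) (j := 2) (k := 0)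
      (by decide) (by decide) (by decide) ht
  · rw [wedge_sub_sub_rotate (X 0 t), wedge_sub_sub_rotate (X 1 t)]
    exact hX.hasDerivWithinAt_norm_sub_sq_fin_three (i := 2) (j := 0) (k := 1)
      (by decide) (by decide) (by decide) ht

/-- For a solution `(X₁,X₂,X₃)` of the three-vortex EP-PV system,
with `A(t)` the signed area of the triangle, the squared mutual distances satisfy
`d/dt L₁₂² = (2/π) Γ₃ A [P_K(L₂₃)/L₂₃² − P_K(L₃₁)/L₃₁²]` and its cyclic analogues.
Here the vortices are indexed by `0, 1, 2`. -/
theorem eppv_three_vortex_distance_eq (Γ : Fin 3 → ℝ) (P_K : ℝ → ℝ)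
    (hPK : ContinuousOn P_K (Set.Ioi 0)) (J : Set ℝ)
    (X : Fin 3 → ℝ → EuclideanSpace ℝ (Fin 2))
    (hX : IsEPPVSolution Γ P_K J X)
    (A : ℝ → ℝ)
    (hA : ∀ t, A t = (1 / 2) * wedge (X 1 t - X 0 t) (X 2 t - X 0 t)) :
    ∀ t ∈ J,
      HasDerivWithinAt (fun τ => ‖X 0 τ - X 1 τ‖ ^ 2)
        ((2 / Real.pi) * Γ 2 * A t *
          (P_K ‖X 1 t - X 2 t‖ / ‖X 1 t - X 2 t‖ ^ 2
            - P_K ‖X 2 t - X 0 t‖ / ‖X 2 t - X 0 t‖ ^ 2)) J t ∧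
      HasDerivWithinAt (fun τ => ‖X 1 τ - X 2 τ‖ ^ 2)
        ((2 / Real.pi) * Γ 0 * A t *
          (P_K ‖X 2 t - X 0 t‖ / ‖X 2 t - X 0 t‖ ^ 2
            - P_K ‖X 0 t - X 1 t‖ / ‖X 0 t - X 1 t‖ ^ 2)) J t ∧
      HasDerivWithinAt (fun τ => ‖X 2 τ - X 0 τ‖ ^ 2)
        ((2 / Real.pi) * Γ 1 * A t *
          (P_K ‖X 0 t - X 1 t‖ / ‖X 0 t - X 1 t‖ ^ 2
            - P_K ‖X 1 t - X 2 t‖ / ‖X 1 t - X 2 t‖ ^ 2)) J t :=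
  eppv_three_vortex_distance_eq_general Γ P_K J X hX A hA
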